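/- arXiv:1712.01324 — 2 statements merged into one kernel-verified Lean document; each statement's English description precedes it below -/
import Mathlib

section
/- For every real λ and every integer n ≥ 0, in ℝ⟦X⟧ one has D_{p,q}^n (e_{p,q}(λX)) = λ^n p^{n(n−1)/2} e_{p,q}(λ p^n X) and D_{p,q}^n (E_{p,q}(λX)) = λ^n q^{n(n−1)/2} E_{p,q}(λ q^n X), where e_{p,q}(λX) = ∑_{m≥0} p^{m(m−1)/2} λ^m X^m/[m]_{p,q}! and E_{p,q}(λX) = ∑_{m≥0} q^{m(m−1)/2} λ^m X^m/[m]_{p,q}!. -/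
noncomputable section
open Finset Polynomial

/-- The (p,q)-number `[n]_{p,q} = (p^n - q^n)/(p - q)`. -/
def pqNum (p q : ℝ) (n : ℕ) : ℝ := (p ^ n - q ^ n) / (p - q)

/-- The (p,q)-factorial `[n]_{p,q}! = ∏_{k=1}^n [k]_{p,q}`. -/
def pqFact (p q : ℝ) (n : ℕ) : ℝ := ∏ k ∈ Finset.Icc 1 n, pqNum p q k

/-- The (p,q)-binomial coefficient. -/
def pqBinom (p q : ℝ) (n k : ℕ) : ℝ := pqFact p q n / (pqFact p q k * pqFact p q (n - k))

/-- The (p,q)-derivative on polynomials: the linear operator with `D(X^n) = [n]_{p,q} X^(n-1)`. -/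
def pqDeriv (p q : ℝ) (f : Polynomial ℝ) : Polynomial ℝ :=
  f.sum fun n a => Polynomial.C (a * pqNum p q n) * Polynomial.X ^ (n - 1)

/-- The (p,q)-derivative on formal power series, acting coefficientwise by
`D(X^n) = [n]_{p,q} X^(n-1)`. -/
def pqDerivPS (p q : ℝ) (f : PowerSeries ℝ) : PowerSeries ℝ :=
  PowerSeries.mk fun n => pqNum p q (n + 1) * PowerSeries.coeff (n + 1) f

/-- The double (p,q)-factorial `[2m]_{p,q}!! = ∏_{k=1}^m [2k]_{p,q}`. -/
def pqDoubleFact (p q : ℝ) (m : ℕ) : ℝ := ∏ k ∈ Finset.Icc 1 m, pqNum p q (2 * k)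

/-- A sequence of real polynomials of exact degree `n` is (p,q)-Appell when
`D_{p,q} f_{n+1}(x) = [n+1]_{p,q} f_n(p x)` for all `n ≥ 0` and all `x`. -/
def IsPQAppell (p q : ℝ) (f : ℕ → Polynomial ℝ) : Prop :=
  (∀ n, (f n).natDegree = n) ∧
    ∀ (n : ℕ) (x : ℝ), (pqDeriv p q (f (n + 1))).eval x = pqNum p q (n + 1) * (f n).eval (p * x)

/-!
Write `e_r(uX) = ∑ r^{m(m-1)/2} u^m X^m / [m]_{p,q}!`. Since `[m+1]_{p,q}! = [m]_{p,q}! [m+1]_{p,q}` and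
`r^{(m+1)m/2} = r^{m(m-1)/2} r^m`, one derivative gives `D_{p,q} e_r(uX) = u e_r(urX)`;
iterating multiplies by `u (ur) ⋯ (ur^{n-1}) = u^n r^{n(n-1)/2}`.
-/

lemma pqNum_pos {p q : ℝ} (hq : 0 ≤ q) (hpq : q < p) {k : ℕ} (hk : k ≠ 0) :
    0 < pqNum p q k :=
  div_pos (sub_pos.2 (pow_lt_pow_left₀ hpq hq hk)) (sub_pos.2 hpq)

lemma pqFact_pos {p q : ℝ} (hq : 0 ≤ q) (hpq : q < p) (n : ℕ) : 0 < pqFact p q n :=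
  Finset.prod_pos fun _ hk => pqNum_pos hq hpq (Nat.one_le_iff_ne_zero.1 (Finset.mem_Icc.1 hk).1)

lemma pqFact_succ (p q : ℝ) (n : ℕ) : pqFact p q (n + 1) = pqFact p q n * pqNum p q (n + 1) :=
  Finset.prod_Icc_succ_top (Nat.le_add_left 1 n) _

lemma pqDerivPS_C_mul (p q a : ℝ) (f : PowerSeries ℝ) :
    pqDerivPS p q (PowerSeries.C a * f) = PowerSeries.C a * pqDerivPS p q f := by
  ext m
  simp [pqDerivPS, mul_left_comm]

/-- `pqExpSeries p q p u` is `e_{p,q}(uX)` and `pqExpSeries p q q u` is `E_{p,q}(uX)`. -/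
def pqExpSeries (p q r u : ℝ) : PowerSeries ℝ :=
  PowerSeries.mk fun m => r ^ (m * (m - 1) / 2) * u ^ m / pqFact p q m

lemma pqDerivPS_pqExpSeries {p q : ℝ} (hq : 0 ≤ q) (hpq : q < p) (r u : ℝ) :
    pqDerivPS p q (pqExpSeries p q r u) = PowerSeries.C u * pqExpSeries p q r (u * r) := by
  ext m
  have hNum : pqNum p q (m + 1) ≠ 0 := (pqNum_pos hq hpq m.succ_ne_zero).ne'
  have hFact : pqFact p q m ≠ 0 := (pqFact_pos hq hpq m).ne'
  simp only [pqDerivPS, pqExpSeries, PowerSeries.coeff_mk, PowerSeries.coeff_C_mul]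
  rw [pqFact_succ, Nat.triangle_succ, pow_add, pow_succ, mul_pow]
  field_simp

lemma iterate_pqDerivPS_pqExpSeries {p q : ℝ} (hq : 0 ≤ q) (hpq : q < p) (r u : ℝ) (n : ℕ) :
    (pqDerivPS p q)^[n] (pqExpSeries p q r u)
      = PowerSeries.C (u ^ n * r ^ (n * (n - 1) / 2)) * pqExpSeries p q r (u * r ^ n) := by
  induction n with
  | zero => simp
  | succ n ih =>
    rw [Function.iterate_succ_apply', ih, pqDerivPS_C_mul, pqDerivPS_pqExpSeries hq hpq,
      ← mul_assoc, ← map_mul, Nat.triangle_succ, mul_assoc u, ← pow_succ]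
    congr 2
    ring

/-- the n-th (p,q)-derivative of the (p,q)-exponential power series. -/
theorem pq_exponential_nth_deriv (p q : ℝ) (hq : 0 < q) (hpq : q < p) (l : ℝ) (n : ℕ) :
    (pqDerivPS p q)^[n]
          (PowerSeries.mk fun m => p ^ (m * (m - 1) / 2) * l ^ m / pqFact p q m)
        = PowerSeries.C (l ^ n * p ^ (n * (n - 1) / 2)) *
            PowerSeries.mk (fun m => p ^ (m * (m - 1) / 2) * (l * p ^ n) ^ m / pqFact p q m) ∧
      (pqDerivPS p q)^[n]
          (PowerSeries.mk fun m => q ^ (m * (m - 1) / 2) * l ^ m / pqFact p q m)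
        = PowerSeries.C (l ^ n * q ^ (n * (n - 1) / 2)) *
            PowerSeries.mk (fun m => q ^ (m * (m - 1) / 2) * (l * q ^ n) ^ m / pqFact p q m) := by
  exact ⟨iterate_pqDerivPS_pqExpSeries hq.le hpq p l n,
    iterate_pqDerivPS_pqExpSeries hq.le hpq q l n⟩
end
end

section
/- The ∗-product of (p,q)-Appell sequences is commutative: if (f_n) and (g_n) are (p,q)-Appell polynomial sequences with coefficient sequences (a_k) and (b_k) (so f_n(x) = ∑_{k=0}^{n} [n choose k]_{p,q} p^{(n−k)(n−k−1)/2} a_k x^{n−k} with a_0 ≠ 0, and similarly for g with b_0 ≠ 0), then for all n ≥ 0 and all real x, ∑_{k=0}^{n} [n choose k]_{p,q} a_{n−k} g_k(x) = ∑_{k=0}^{n} [n choose k]_{p,q} b_{n−k} f_k(x), i.e. (f∗g)_n = (g∗f)_n. -/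
noncomputable section
open Finset Polynomial

/- Both sides expand to the double sum of `[n; k][k; j] a_{n-k} b_j p^{…} x^{k-j}` over `j ≤ k ≤ n`,
once with the roles of `a` and `b` exchanged. The reflection `(k, j) ↦ (n - j, n - k)` of the
triangle swaps these roles and fixes `k - j`, and it preserves the coefficient because
`[n; k][k; j]` and `[n; n-j][n-j; n-k]` are both the trinomial `[n]! / ([n-k]! [k-j]! [j]!)`. -/

theorem sum_range_triangle_reflect {M : Type*} [AddCommMonoid M] (n : ℕ) (F : ℕ → ℕ → M) :
    ∑ k ∈ range (n + 1), ∑ j ∈ range (k + 1), F k j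
      = ∑ k ∈ range (n + 1), ∑ j ∈ range (k + 1), F (n - j) (n - k) := by
  rw [sum_sigma', sum_sigma']
  have reflect_reflect : ∀ s ∈ (range (n + 1)).sigma (fun k => range (k + 1)),
      (⟨n - (n - s.1), n - (n - s.2)⟩ : Σ _ : ℕ, ℕ) = s := by
    rintro ⟨k, j⟩ h
    simp only [mem_sigma, mem_range, Sigma.mk.injEq] at h ⊢
    exact ⟨by omega, heq_of_eq (by omega)⟩
  refine sum_nbij' (fun s => ⟨n - s.2, n - s.1⟩) (fun s => ⟨n - s.2, n - s.1⟩)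
    (fun s h => ?_) (fun s h => ?_) reflect_reflect reflect_reflect (fun s h => ?_) <;>
    simp only [mem_sigma, mem_range] at h ⊢
  · omega
  · omega
  · rw [Nat.sub_sub_self (by omega), Nat.sub_sub_self (by omega)]

theorem pqFact_eq_zero_of_le {p q : ℝ} {k n : ℕ} (hkn : k ≤ n) (hk : pqFact p q k = 0) :
    pqFact p q n = 0 := by
  obtain ⟨i, hi, hi0⟩ := prod_eq_zero_iff.mp hk
  exact prod_eq_zero (Icc_subset_Icc_right hkn hi) hi0

theorem pqBinom_mul_pqBinom (p q : ℝ) {n k j : ℕ} (hjk : j ≤ k) (hkn : k ≤ n) :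
    pqBinom p q n k * pqBinom p q k j
      = pqBinom p q n (n - j) * pqBinom p q (n - j) (n - k) := by
  unfold pqBinom
  rw [show n - (n - j) = j by omega, show n - j - (n - k) = k - j by omega]
  by_cases hn : pqFact p q n = 0
  · simp [hn]
  have hF : ∀ m ≤ n, pqFact p q m ≠ 0 := fun m hm h => hn (pqFact_eq_zero_of_le hm h)
  field_simp [hF k hkn, hF j (by omega), hF (n - k) (by omega), hF (k - j) (by omega),
    hF (n - j) (by omega)]

theorem pq_appell_star_comm_general (p q : ℝ)
    (a b : ℕ → ℝ)
    (f g : ℕ → ℝ → ℝ)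
    (hf : ∀ (n : ℕ) (x : ℝ), f n x = ∑ k ∈ Finset.range (n + 1),
      pqBinom p q n k * p ^ ((n - k) * (n - k - 1) / 2) * a k * x ^ (n - k))
    (hg : ∀ (n : ℕ) (x : ℝ), g n x = ∑ k ∈ Finset.range (n + 1),
      pqBinom p q n k * p ^ ((n - k) * (n - k - 1) / 2) * b k * x ^ (n - k)) :
    ∀ (n : ℕ) (x : ℝ),
      (∑ k ∈ Finset.range (n + 1), pqBinom p q n k * a (n - k) * g k x)
        = ∑ k ∈ Finset.range (n + 1), pqBinom p q n k * b (n - k) * f k x := by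
  intro n x
  simp only [hf, hg, mul_sum]
  rw [sum_range_triangle_reflect n]
  refine sum_congr rfl fun k hk => sum_congr rfl fun j hj => ?_
  have hkn : k ≤ n := Nat.lt_succ_iff.mp (mem_range.mp hk)
  have hjk : j ≤ k := Nat.lt_succ_iff.mp (mem_range.mp hj)
  rw [show n - (n - j) = j by omega, show n - j - (n - k) = k - j by omega]
  linear_combination (a j * b (n - k) * p ^ ((k - j) * (k - j - 1) / 2) * x ^ (k - j)) *
    (pqBinom_mul_pqBinom p q hjk hkn).symm

/-- the *-product of (p,q)-Appell sequences is commutative. -/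
theorem pq_appell_star_comm (p q : ℝ) (hq : 0 < q) (hpq : q < p)
    (a b : ℕ → ℝ) (ha : a 0 ≠ 0) (hb : b 0 ≠ 0)
    (f g : ℕ → ℝ → ℝ)
    (hf : ∀ (n : ℕ) (x : ℝ), f n x = ∑ k ∈ Finset.range (n + 1),
      pqBinom p q n k * p ^ ((n - k) * (n - k - 1) / 2) * a k * x ^ (n - k))
    (hg : ∀ (n : ℕ) (x : ℝ), g n x = ∑ k ∈ Finset.range (n + 1),
      pqBinom p q n k * p ^ ((n - k) * (n - k - 1) / 2) * b k * x ^ (n - k)) :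
    ∀ (n : ℕ) (x : ℝ),
      (∑ k ∈ Finset.range (n + 1), pqBinom p q n k * a (n - k) * g k x)
        = ∑ k ∈ Finset.range (n + 1), pqBinom p q n k * b (n - k) * f k x :=
  pq_appell_star_comm_general p q a b f g hf hg
end
end
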